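/- (Trace distance contracts under partial trace) Let d_A, d_B ≥ 1 and let ρ, σ be density matrices on ℂ^{d_A·d_B}, viewed as matrices indexed by Fin d_A × Fin d_B. Then T(tr_B ρ, tr_B σ) ≤ T(ρ, σ), where tr_B denotes the partial trace over the second factor. -/

import Mathlib

set_option maxHeartbeats 1000000

open ComplexOrder

noncomputable def traceNorm {n : Type*} [Fintype n] [DecidableEq n]
    (A : Matrix n n ℂ) : ℝ :=
  ((Matrix.posSemidef_conjTranspose_mul_self A).1.eigenvectorUnitary.1 *
    Matrix.diagonal (((↑) : ℝ → ℂ) ∘ (√·) ∘ (Matrix.posSemidef_conjTranspose_mul_self A).1.eigenvalues) *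
    (star (Matrix.posSemidef_conjTranspose_mul_self A).1.eigenvectorUnitary :
      Matrix n n ℂ)).trace.re

open Matrix in
lemma conj_diag_mul {n : Type*} [Fintype n] [DecidableEq n]
    (U : Matrix n n ℂ) (hU : Uᴴ * U = 1) (d e : n → ℂ) :
    (U * diagonal d * Uᴴ) * (U * diagonal e * Uᴴ) = U * diagonal (fun k => d k * e k) * Uᴴ := by
  have : diagonal d * (Uᴴ * U) * diagonal e = diagonal (fun k => d k * e k) := by
    rw [hU, mul_one, diagonal_mul_diagonal]
  calc (U * diagonal d * Uᴴ) * (U * diagonal e * Uᴴ)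
      = U * (diagonal d * (Uᴴ * U) * diagonal e) * Uᴴ := by noncomm_ring
    _ = U * diagonal (fun k => d k * e k) * Uᴴ := by rw [this]

open Matrix in
lemma trace_conj_diag {n : Type*} [Fintype n] [DecidableEq n]
    (U : Matrix n n ℂ) (hU : Uᴴ * U = 1) (d : n → ℂ) :
    (U * diagonal d * Uᴴ).trace = ∑ k, d k := by
  rw [trace_mul_cycle, hU, one_mul, trace_diagonal]

open Matrix in
lemma traceNorm_eq_sum_abs {n : Type*} [Fintype n] [DecidableEq n]
    {A : Matrix n n ℂ} (hA : A.IsHermitian) :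
    traceNorm A = ∑ k, |hA.eigenvalues k| := by
  set U : Matrix n n ℂ := (hA.eigenvectorUnitary : Matrix n n ℂ) with hUdef
  have hU1 : Uᴴ * U = 1 := by
    rw [← star_eq_conjTranspose]
    exact (Matrix.mem_unitaryGroup_iff').mp hA.eigenvectorUnitary.2
  set B : Matrix n n ℂ := U * diagonal (fun k => ((|hA.eigenvalues k| : ℝ) : ℂ)) * Uᴴ with hBdef
  have hBps : B.PosSemidef := by
    refine PosSemidef.mul_mul_conjTranspose_same (PosSemidef.diagonal fun k => ?_) U
    simpa using Complex.zero_le_real.mpr (abs_nonneg (hA.eigenvalues k))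
  have hspec : A = U * diagonal (RCLike.ofReal ∘ hA.eigenvalues) * Uᴴ := by
    rw [← star_eq_conjTranspose]; exact hA.spectral_theorem
  have hsq : B ^ 2 = Aᴴ * A := by
    have hAA : Aᴴ * A = A * A := by rw [hA.eq]
    rw [hAA, pow_two, hBdef, conj_diag_mul U hU1]
    conv_rhs => rw [hspec]
    rw [conj_diag_mul U hU1]
    have hfun : (fun k => ((|hA.eigenvalues k| : ℝ) : ℂ) * ((|hA.eigenvalues k| : ℝ) : ℂ))
        = fun k => (RCLike.ofReal ∘ hA.eigenvalues) k * (RCLike.ofReal ∘ hA.eigenvalues) k := by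
      funext k
      show ((|hA.eigenvalues k| : ℝ) : ℂ) * ((|hA.eigenvalues k| : ℝ) : ℂ)
          = ((hA.eigenvalues k : ℝ) : ℂ) * ((hA.eigenvalues k : ℝ) : ℂ)
      rw [← Complex.ofReal_mul, ← Complex.ofReal_mul, abs_mul_abs_self]
    rw [hfun]
  have hT : traceNorm A = (cfc Real.sqrt (Aᴴ * A)).trace.re := by
    rw [(Matrix.posSemidef_conjTranspose_mul_self A).1.cfc_eq Real.sqrt]; rfl
  have hB : cfc Real.sqrt (Aᴴ * A) = B := by
    have hAA : Aᴴ * A = A ^ 2 := by rw [hA.eq, pow_two]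
    rw [hAA, ← cfc_comp_pow Real.sqrt 2 A (ha := hA.isSelfAdjoint)]
    simp only [Real.sqrt_sq_eq_abs]
    rw [hA.cfc_eq]
    rfl
  rw [hT, hB, hBdef, trace_conj_diag U hU1, ← Complex.ofReal_sum]
  exact Complex.ofReal_re _

open Matrix in
lemma re_trace_mul_le {n : Type*} [Fintype n] [DecidableEq n]
    {A : Matrix n n ℂ} (hA : A.IsHermitian) (M : Matrix n n ℂ) (hM : Mᴴ * M = 1) :
    (M * A).trace.re ≤ ∑ k, |hA.eigenvalues k| := by
  set U : Matrix n n ℂ := (hA.eigenvectorUnitary : Matrix n n ℂ) with hUdef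
  have hU1 : Uᴴ * U = 1 := by
    rw [← star_eq_conjTranspose]
    exact (Matrix.mem_unitaryGroup_iff').mp hA.eigenvectorUnitary.2
  have hU2 : U * Uᴴ = 1 := by
    rw [← star_eq_conjTranspose]
    exact (Matrix.mem_unitaryGroup_iff).mp hA.eigenvectorUnitary.2
  set W : Matrix n n ℂ := Uᴴ * M * U with hWdef
  have hW : Wᴴ * W = 1 := by
    have hWc : Wᴴ = Uᴴ * Mᴴ * U := by
      rw [hWdef, conjTranspose_mul, conjTranspose_mul, conjTranspose_conjTranspose, mul_assoc]
    rw [hWc, hWdef]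
    calc Uᴴ * Mᴴ * U * (Uᴴ * M * U) = Uᴴ * (Mᴴ * ((U * Uᴴ) * M)) * U := by noncomm_ring
      _ = 1 := by rw [hU2, one_mul, hM, mul_one, hU1]
  have hWentry : ∀ k, |(W k k).re| ≤ 1 := by
    intro k
    have h := congrFun (congrFun hW k) k
    simp only [Matrix.mul_apply, Matrix.conjTranspose_apply, Matrix.one_apply_eq, Complex.star_def] at h
    have h' : (↑(∑ j, Complex.normSq (W j k)) : ℂ) = 1 := by
      rw [Complex.ofReal_sum, ← h]
      exact Finset.sum_congr rfl fun j _ => Complex.normSq_eq_conj_mul_self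
    have h1 : ∑ j, Complex.normSq (W j k) = 1 := by exact_mod_cast h'
    have h2 : Complex.normSq (W k k) ≤ 1 := by
      rw [← h1]
      exact Finset.single_le_sum (f := fun j => Complex.normSq (W j k))
        (fun j _ => Complex.normSq_nonneg _) (Finset.mem_univ k)
    have h3 : (W k k).re ^ 2 ≤ 1 := by
      refine le_trans ?_ h2
      rw [Complex.normSq_apply]
      nlinarith [sq_nonneg (W k k).im]
    nlinarith [abs_nonneg (W k k).re, sq_abs (W k k).re]
  have hspec : A = U * diagonal (RCLike.ofReal ∘ hA.eigenvalues) * Uᴴ := by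
    rw [← star_eq_conjTranspose]; exact hA.spectral_theorem
  have htr : (M * A).trace = ∑ k, W k k * ((hA.eigenvalues k : ℝ) : ℂ) := by
    conv_lhs => rw [hspec]
    have hre : M * (U * diagonal (RCLike.ofReal ∘ hA.eigenvalues) * Uᴴ)
        = (U * (W * diagonal (RCLike.ofReal ∘ hA.eigenvalues))) * Uᴴ := by
      calc M * (U * diagonal (RCLike.ofReal ∘ hA.eigenvalues) * Uᴴ)
          = (U * Uᴴ) * (M * (U * diagonal (RCLike.ofReal ∘ hA.eigenvalues) * Uᴴ)) := by
            rw [hU2, one_mul]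
        _ = _ := by rw [hWdef]; noncomm_ring
    rw [hre, trace_mul_cycle, ← mul_assoc, hU1, one_mul]
    simp [trace, Matrix.mul_apply, Matrix.diagonal, Matrix.diag, Finset.sum_ite_eq',
      Function.comp]
  rw [htr, Complex.re_sum]
  refine Finset.sum_le_sum fun k _ => ?_
  have hre : (W k k * ((hA.eigenvalues k : ℝ) : ℂ)).re = (W k k).re * hA.eigenvalues k := by
    simp [Complex.mul_re]
  rw [hre]
  have h1 : |(W k k).re * hA.eigenvalues k| ≤ |hA.eigenvalues k| := by
    rw [abs_mul]
    nlinarith [abs_nonneg (hA.eigenvalues k), hWentry k, abs_nonneg (W k k).re]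
  exact le_trans (le_abs_self _) h1

/-- Trace distance between matrices: half the trace norm of the difference. -/
noncomputable def traceDist {n : Type*} [Fintype n] [DecidableEq n]
    (ρ σ : Matrix n n ℂ) : ℝ :=
  traceNorm (ρ - σ) / 2

/-- A density matrix: positive semidefinite with trace one. -/
def IsDensityMatrix {n : Type*} [Fintype n] [DecidableEq n]
    (ρ : Matrix n n ℂ) : Prop :=
  ρ.PosSemidef ∧ ρ.trace = 1

/-- Partial trace over the second tensor factor. -/
noncomputable def partialTraceB {dA dB : ℕ}
    (M : Matrix (Fin dA × Fin dB) (Fin dA × Fin dB) ℂ) : Matrix (Fin dA) (Fin dA) ℂ :=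
  Matrix.of fun i i' => ∑ j, M (i, j) (i', j)

/-- tensor with the identity on the B factor -/
noncomputable def myKron {dA dB : ℕ} (S : Matrix (Fin dA) (Fin dA) ℂ) :
    Matrix (Fin dA × Fin dB) (Fin dA × Fin dB) ℂ :=
  Matrix.of fun p q => S p.1 q.1 * (if p.2 = q.2 then 1 else 0)

open Matrix in
lemma myKron_conjTranspose {dA dB : ℕ} (S : Matrix (Fin dA) (Fin dA) ℂ) :
    (myKron (dB := dB) S)ᴴ = myKron Sᴴ := by
  ext p q
  show star (S q.1 p.1 * (if q.2 = p.2 then (1 : ℂ) else 0))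
      = star (S q.1 p.1) * (if p.2 = q.2 then (1 : ℂ) else 0)
  by_cases h : p.2 = q.2
  · rw [if_pos h, if_pos h.symm, mul_one, mul_one]
  · rw [if_neg h, if_neg (fun hh => h hh.symm), mul_zero, mul_zero, star_zero]

lemma myKron_mul {dA dB : ℕ} (S T : Matrix (Fin dA) (Fin dA) ℂ) :
    myKron (dB := dB) S * myKron T = myKron (S * T) := by
  ext p q
  simp only [Matrix.mul_apply, myKron, Matrix.of_apply, Fintype.sum_prod_type]
  simp only [mul_ite, ite_mul, mul_one, one_mul, mul_zero, zero_mul,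
    Finset.sum_ite_eq, Finset.mem_univ, if_true]
  rw [Finset.sum_comm]
  simp [Finset.sum_ite_eq', Finset.mul_sum]

lemma myKron_one {dA dB : ℕ} : myKron (dB := dB) (1 : Matrix (Fin dA) (Fin dA) ℂ) = 1 := by
  ext p q
  by_cases h1 : p.1 = q.1 <;> by_cases h2 : p.2 = q.2 <;>
    simp [myKron, Matrix.one_apply, Prod.ext_iff, h1, h2]

lemma trace_myKron_mul {dA dB : ℕ} (S : Matrix (Fin dA) (Fin dA) ℂ)
    (Δ : Matrix (Fin dA × Fin dB) (Fin dA × Fin dB) ℂ) :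
    (myKron S * Δ).trace = (S * partialTraceB Δ).trace := by
  have h1 : (myKron S * Δ).trace = ∑ i, ∑ j, ∑ i', S i i' * Δ (i', j) (i, j) := by
    simp only [Matrix.trace, Matrix.diag, Matrix.mul_apply, myKron, Matrix.of_apply,
      Fintype.sum_prod_type, mul_ite, ite_mul, mul_one, one_mul, mul_zero, zero_mul,
      Finset.sum_ite_eq, Finset.sum_ite_eq', Finset.mem_univ, if_true]
  have h2 : (S * partialTraceB Δ).trace = ∑ i, ∑ i', ∑ j, S i i' * Δ (i', j) (i, j) := by
    simp only [Matrix.trace, Matrix.diag, Matrix.mul_apply, partialTraceB, Matrix.of_apply,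
      Finset.mul_sum]
  rw [h1, h2]
  exact Finset.sum_congr rfl fun i _ => Finset.sum_comm

/-- The trace distance contracts under the partial trace over the second factor. -/
theorem traceDist_partialTrace_le {dA dB : ℕ} (hA : 1 ≤ dA) (hB : 1 ≤ dB)
    (ρ σ : Matrix (Fin dA × Fin dB) (Fin dA × Fin dB) ℂ)
    (hρ : IsDensityMatrix ρ) (hσ : IsDensityMatrix σ) :
    traceDist (partialTraceB ρ) (partialTraceB σ) ≤ traceDist ρ σ := by
  have hΔ : (ρ - σ).IsHermitian := hρ.1.1.sub hσ.1.1
  have hpt : partialTraceB ρ - partialTraceB σ = partialTraceB (ρ - σ) := by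
    ext i i'
    simp only [Matrix.sub_apply, partialTraceB, Matrix.of_apply]
    rw [← Finset.sum_sub_distrib]
  have hX : (partialTraceB (ρ - σ)).IsHermitian := by
    ext i i'
    simp only [Matrix.conjTranspose_apply, partialTraceB, Matrix.of_apply, star_sum]
    exact Finset.sum_congr rfl fun j _ => (hΔ.apply (i, j) (i', j))
  set X := partialTraceB (ρ - σ) with hXdef
  set U : Matrix (Fin dA) (Fin dA) ℂ := (hX.eigenvectorUnitary : Matrix (Fin dA) (Fin dA) ℂ)
    with hUdef
  have hU1 : U.conjTranspose * U = 1 := by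
    rw [← Matrix.star_eq_conjTranspose]
    exact (Matrix.mem_unitaryGroup_iff').mp hX.eigenvectorUnitary.2
  have hU2 : U * U.conjTranspose = 1 := by
    rw [← Matrix.star_eq_conjTranspose]
    exact (Matrix.mem_unitaryGroup_iff).mp hX.eigenvectorUnitary.2
  set s : Fin dA → ℂ := fun k => if 0 ≤ hX.eigenvalues k then (1 : ℂ) else -1 with hsdef
  set S : Matrix (Fin dA) (Fin dA) ℂ := U * Matrix.diagonal s * U.conjTranspose with hSdef
  have hstar : star s = s := by
    funext k
    by_cases h : 0 ≤ hX.eigenvalues k <;> simp [hsdef, h]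
  have hSct : S.conjTranspose = S := by
    rw [hSdef, Matrix.conjTranspose_mul, Matrix.conjTranspose_mul,
      Matrix.conjTranspose_conjTranspose, Matrix.diagonal_conjTranspose, hstar, mul_assoc]
  have hSu : S.conjTranspose * S = 1 := by
    rw [hSct, hSdef, conj_diag_mul U hU1]
    have : (fun k => s k * s k) = fun _ => (1 : ℂ) := by
      funext k
      by_cases h : 0 ≤ hX.eigenvalues k <;> simp [hsdef, h]
    rw [this, Matrix.diagonal_one, mul_one, hU2]
  have hspec : X = U * Matrix.diagonal (RCLike.ofReal ∘ hX.eigenvalues) * U.conjTranspose := by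
    rw [← Matrix.star_eq_conjTranspose]; exact hX.spectral_theorem
  have htrS : (S * X).trace = ∑ k, ((|hX.eigenvalues k| : ℝ) : ℂ) := by
    conv_lhs => rw [hSdef, hspec, conj_diag_mul U hU1]
    rw [trace_conj_diag U hU1]
    refine Finset.sum_congr rfl fun k _ => ?_
    by_cases h : 0 ≤ hX.eigenvalues k
    · simp [hsdef, h, abs_of_nonneg h]
    · push_neg at h
      simp [hsdef, not_le.mpr h, abs_of_neg h]
  have hMu : (myKron (dB := dB) S).conjTranspose * myKron S = 1 := by
    rw [myKron_conjTranspose, myKron_mul, hSu, myKron_one]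
  have hkey : traceNorm X ≤ traceNorm (ρ - σ) := by
    rw [traceNorm_eq_sum_abs hX, traceNorm_eq_sum_abs hΔ]
    have h1 : (∑ k, |hX.eigenvalues k|) = (S * X).trace.re := by
      rw [htrS, ← Complex.ofReal_sum, Complex.ofReal_re]
    rw [h1, ← trace_myKron_mul]
    exact re_trace_mul_le hΔ _ hMu
  rw [traceDist, traceDist, hpt]
  linarith
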